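/- arXiv:1203.5227 — 5 statements merged into one kernel-verified Lean document; each statement's English description precedes it below -/
import Mathlib

section
/- Let D be a positive integer with 3 ∤ D, and let a be an integer such that for every i ∈ {0,1,2,3,4} the integer a + 2iD is odd and its absolute value |a + 2iD| is a prime number. Then the middle term satisfies a + 4D = 3 or a + 4D = -3. In particular, for a given such D there is at most one prime quintet at equal distance 2D extending over positive and negative integers, namely the one centered at ±3. -/
lemma aux_pm_three (x : ℤ) (hp : Nat.Prime x.natAbs) (hd : 3 ∣ x) :
    x = 3 ∨ x = -3 := by
  have h3 : (3:ℕ) ∣ x.natAbs := by omega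
  rcases (Nat.Prime.eq_one_or_self_of_dvd hp 3 h3) with h | h <;> omega

/-- If `D ≥ 1`, `3 ∤ D`, and the five integers `a + 2iD` (`i = 0,…,4`)
are all odd with prime absolute value, then the middle term `a + 4D` is `3` or `-3`.
(Primes of the extended classification are the integers with prime absolute value.) -/
theorem quintet_equal_distance_centered_at_three (D : ℤ) (hD : 0 < D) (h3 : ¬ (3 ∣ D))
    (a : ℤ)
    (h : ∀ i : ℕ, i < 5 → Odd (a + 2 * i * D) ∧ Nat.Prime (a + 2 * i * D).natAbs) :
    a + 4 * D = 3 ∨ a + 4 * D = -3 := by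
  have h0 := (h 0 (by norm_num)).2
  have h1 := (h 1 (by norm_num)).2
  have h2 := (h 2 (by norm_num)).2
  have h3' := (h 3 (by norm_num)).2
  have h4 := (h 4 (by norm_num)).2
  push_cast at h0 h1 h2 h3' h4
  have hDm : D % 3 = 1 ∨ D % 3 = 2 := by omega
  have ham : a % 3 = 0 ∨ a % 3 = 1 ∨ a % 3 = 2 := by omega
  have hcase : 3 ∣ a ∨ 3 ∣ (a + 2*D) ∨ 3 ∣ (a + 4*D) := by
    rcases hDm with hd | hd <;> rcases ham with ha | ha | ha <;> omega
  rcases hcase with hc | hc | hc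
  · have e0 := aux_pm_three (a + 0 * D) h0 (by omega)
    have e3 := aux_pm_three (a + 6 * D) h3' (by omega)
    have hD1 : D = 1 ∧ a = -3 := by
      rcases e0 with e0 | e0 <;> rcases e3 with e3 | e3 <;> omega
    exfalso
    have : (a + 2 * D).natAbs = 1 := by omega
    rw [this] at h1
    exact Nat.not_prime_one h1
  · have e1 := aux_pm_three (a + 2 * D) h1 (by omega)
    have e4 := aux_pm_three (a + 8 * D) h4 (by omega)
    have hD1 : D = 1 ∧ a = -5 := by
      rcases e1 with e1 | e1 <;> rcases e4 with e4 | e4 <;> omega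
    exfalso
    have : (a + 4 * D).natAbs = 1 := by omega
    rw [this] at h2
    exact Nat.not_prime_one h2
  · have e2 := aux_pm_three (a + 4 * D) h2 (by omega)
    omega
end

section
/- Let p be an odd prime and D a positive integer with p ∤ D, and let a be an integer such that for every i ∈ {0, 1, …, p-1} the absolute value |a + 2iD| is a prime number. Then there exists an index i ∈ {0, 1, …, p-1} with a + 2iD = p or a + 2iD = -p. In particular, for any prime p > 3 and any distance 2D with 3 | D and p ∤ D, there is at most one (2p-1)-tuple p - 2(p-1)D, …, p - 2D, p, p + 2D, …, p + 2(p-1)D consisting entirely of primes of the extended classification. -/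
/-!
Since `p ∤ 2D`, the `p` terms `a + 2iD`, `i < p`, run through all residues modulo `p`, so one of
them is divisible by `p`. A prime divisible by the prime `p` is `p`, so that term is `±p`.
-/

theorem exists_lt_dvd_add_mul {n d : ℕ} [NeZero n] (hd : d.Coprime n) (a : ℤ) :
    ∃ i < n, (n : ℤ) ∣ a + i * d := by
  have hunit : IsUnit (d : ZMod n) := (ZMod.isUnit_iff_coprime d n).2 hd
  set x : ZMod n := -a * hunit.unit⁻¹
  refine ⟨x.val, x.val_lt, (ZMod.intCast_zmod_eq_zero_iff_dvd _ n).1 ?_⟩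
  push_cast
  rw [ZMod.natCast_zmod_val, mul_assoc, Units.inv_mul_of_eq hunit.unit_spec.symm]
  ring

theorem Int.eq_or_eq_neg_of_natAbs_prime_of_dvd {p : ℕ} {x : ℤ} (hp : p.Prime)
    (hx : x.natAbs.Prime) (hpx : (p : ℤ) ∣ x) : x = p ∨ x = -(p : ℤ) := by
  have hdvd : p ∣ x.natAbs := Int.natCast_dvd.1 hpx
  exact Int.natAbs_eq_iff.1 ((Nat.prime_dvd_prime_iff_eq hp hx).1 hdvd).symm

theorem p_tuple_contains_pm_p_general (p : ℕ) (hp : p.Prime) (hodd : Odd p)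
    (D : ℕ) (hpD : ¬ (p ∣ D)) (a : ℤ)
    (h : ∀ i : ℕ, i < p → Nat.Prime (a + 2 * i * D).natAbs) :
    ∃ i : ℕ, i < p ∧ (a + 2 * i * D = p ∨ a + 2 * i * D = -(p : ℤ)) := by
  have : NeZero p := ⟨hp.ne_zero⟩
  have hcop : (2 * D).Coprime p :=
    Nat.Coprime.mul_left (Nat.coprime_two_left.2 hodd) ((hp.coprime_iff_not_dvd.2 hpD).symm)
  obtain ⟨i, hi, hdvd⟩ := exists_lt_dvd_add_mul hcop a
  have hterm : a + i * ((2 * D : ℕ) : ℤ) = a + 2 * i * D := by push_cast; ring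
  rw [hterm] at hdvd
  exact ⟨i, hi, Int.eq_or_eq_neg_of_natAbs_prime_of_dvd hp (h i hi) hdvd⟩

/-- If `p` is an odd prime, `D ≥ 1` with `p ∤ D`, and all `p` integers
`a + 2iD` (`i = 0,…,p-1`) have prime absolute value, then one of them equals `p`
or `-p`. -/
theorem p_tuple_contains_pm_p (p : ℕ) (hp : p.Prime) (hodd : Odd p)
    (D : ℕ) (hD : 0 < D) (hpD : ¬ (p ∣ D)) (a : ℤ)
    (h : ∀ i : ℕ, i < p → Nat.Prime (a + 2 * i * D).natAbs) :
    ∃ i : ℕ, i < p ∧ (a + 2 * i * D = p ∨ a + 2 * i * D = -(p : ℤ)) :=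
  p_tuple_contains_pm_p_general p hp hodd D hpD a h
end

section
/- Let p be a prime number and D a positive integer such that all p numbers p, p + D, p + 2D, …, p + (p-1)D are prime. Then every prime p' < p divides D. -/
theorem Nat.exists_lt_dvd_add_mul_of_coprime {q D : ℕ} [NeZero q] (hqD : q.Coprime D) (a : ℕ) :
    ∃ i < q, q ∣ a + i * D := by
  let u := ZMod.unitOfCoprime D hqD.symm
  refine ⟨(-(a : ZMod q) * ↑u⁻¹).val, ZMod.val_lt _, ?_⟩
  rw [← ZMod.natCast_eq_zero_iff]
  push_cast
  rw [ZMod.natCast_zmod_val, mul_assoc, show (D : ZMod q) = u from rfl, Units.inv_mul, mul_one,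
    add_neg_cancel]

theorem exceptional_tuple_forces_divisibility_general (p D : ℕ)
    (h : ∀ i : ℕ, i < p → Nat.Prime (p + i * D)) :
    ∀ p' : ℕ, p'.Prime → p' < p → p' ∣ D := by
  intro p' hp' hlt
  by_contra hndvd
  have : NeZero p' := ⟨hp'.ne_zero⟩
  obtain ⟨i, hi, hdvd⟩ :=
    Nat.exists_lt_dvd_add_mul_of_coprime (hp'.coprime_iff_not_dvd.mpr hndvd) p
  have heq : p' = p + i * D := (Nat.prime_dvd_prime_iff_eq hp' (h i (hi.trans hlt))).mp hdvd
  omega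

/-- Corollary 5: If the `p` numbers `p, p + D, …, p + (p-1)D` are all
prime, then every prime `p' < p` divides `D`. -/
theorem exceptional_tuple_forces_divisibility (p D : ℕ) (hp : p.Prime) (hD : 0 < D)
    (h : ∀ i : ℕ, i < p → Nat.Prime (p + i * D)) :
    ∀ p' : ℕ, p'.Prime → p' < p → p' ∣ D :=
  exceptional_tuple_forces_divisibility_general p D h
end

section
/- Let p₁ < p₂ be odd primes, m₁, m₂ ≥ 1 integers, and D ≥ 1 an integer with p₂ - p₁ > 2D. Suppose the two prime powers satisfy p₁^{m₁} = p₂^{m₂} + 2D. Then for every k ∈ {1, 2, 3, 4} it is impossible that p₂^{m₂+1} = p₁^{m₁+1} + 2kD. (These are the four excluded configurations in which the quintet at equal distance pattern [2D,2D,2D,2D] containing the adjacent prime power members p₂^{m₂}, p₁^{m₁} could repeat with the next higher powers p₁^{m₁+1}, p₂^{m₂+1} occupying positions 1 and 2, 3, 4, or 5 of a new quintet.) -/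
/-- from Corollary 12: For odd primes `p₁ < p₂` with `p₂ - p₁ > 2D`
and prime powers satisfying `p₁^m₁ = p₂^m₂ + 2D`, for every `k ∈ {1,2,3,4}` it is
impossible that `p₂^(m₂+1) = p₁^(m₁+1) + 2kD`. -/
theorem quintet_no_repeat_with_next_powers (p₁ p₂ m₁ m₂ D : ℕ)
    (hp₁ : p₁.Prime) (hp₂ : p₂.Prime) (hodd₁ : Odd p₁) (hodd₂ : Odd p₂)
    (hlt : p₁ < p₂) (hm₁ : 1 ≤ m₁) (hm₂ : 1 ≤ m₂) (hD : 1 ≤ D)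
    (hgap : p₁ + 2 * D < p₂) (h : p₁ ^ m₁ = p₂ ^ m₂ + 2 * D) :
    ∀ k : ℕ, 1 ≤ k → k ≤ 4 → p₂ ^ (m₂ + 1) ≠ p₁ ^ (m₁ + 1) + 2 * k * D := by
  intro k hk1 hk4 heq
  have hB : p₂ ≤ p₂ ^ m₂ := Nat.le_self_pow (by omega) _
  have e : p₂ ^ m₂ * p₂ = p₁ ^ m₁ * p₁ + 2 * k * D := by
    rw [← pow_succ, ← pow_succ]; exact heq
  rw [h] at e
  nlinarith [e, hB, hgap, hk4, hD, hp₁.two_le, sq_nonneg (2 * D - 1)]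
end

section
/- Golomb's arithmetic formula: for all natural numbers m > 1 and n > 1 with gcd(m, n) = 1, one has ∑_{d | mn} μ(d) (log d)² = 2 Λ(m) Λ(n), where μ is the Möbius function and Λ is the von Mangoldt function. -/
/-!
Expanding `log² (ab) = (log a + log b)²` over the divisors `d = ab` of `mn`, with `a ∣ m`, `b ∣ n`,
writes the sum through `S_k(n) = ∑_{d ∣ n} μ(d) (log d)^k` for `k ≤ 2`. For `n > 1` one has
`S_0(n) = 0` and `S_1(n) = -Λ(n)`, so only the cross term `2 S_1(m) S_1(n)` survives.
-/

open ArithmeticFunction ArithmeticFunction.Moebius Finset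

theorem Nat.Coprime.sum_divisors_mul_eq {M : Type*} [AddCommMonoid M] {m n : ℕ}
    (hmn : m.Coprime n) (f : ℕ → M) :
    ∑ d ∈ (m * n).divisors, f d = ∑ p ∈ m.divisors ×ˢ n.divisors, f (p.1 * p.2) := by
  rw [hmn.divisors_mul, sum_map]
  exact sum_attach _ fun p : ℕ × ℕ => f (p.1 * p.2)

theorem ArithmeticFunction.sum_divisors_moebius_eq_zero {R : Type*} [Ring R] {n : ℕ}
    (hn : n ≠ 1) : ∑ d ∈ n.divisors, (μ d : R) = 0 := by
  have h := congr($(coe_moebius_mul_coe_zeta (R := R)) n)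
  rwa [coe_mul_zeta_apply, one_apply_ne hn] at h

theorem ArithmeticFunction.sum_divisors_mul_moebius_mul_log_sq {m n : ℕ} (hmn : m.Coprime n) :
    ∑ d ∈ (m * n).divisors, (μ d : ℝ) * Real.log d ^ 2 =
      (∑ d ∈ m.divisors, (μ d : ℝ) * Real.log d ^ 2) * ∑ d ∈ n.divisors, (μ d : ℝ) +
      2 * (∑ d ∈ m.divisors, (μ d : ℝ) * Real.log d) * ∑ d ∈ n.divisors, (μ d : ℝ) * Real.log d +
      (∑ d ∈ m.divisors, (μ d : ℝ)) * ∑ d ∈ n.divisors, (μ d : ℝ) * Real.log d ^ 2 := by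
  rw [mul_assoc 2, hmn.sum_divisors_mul_eq, sum_product, sum_mul_sum, sum_mul_sum, sum_mul_sum]
  simp only [mul_sum, ← sum_add_distrib]
  refine sum_congr rfl fun a ha => sum_congr rfl fun b hb => ?_
  have hab : a.Coprime b := (hmn.coprime_dvd_left (Nat.dvd_of_mem_divisors ha)).coprime_dvd_right
    (Nat.dvd_of_mem_divisors hb)
  have ha0 : (a : ℝ) ≠ 0 := Nat.cast_ne_zero.mpr (Nat.ne_of_gt (Nat.pos_of_mem_divisors ha))
  have hb0 : (b : ℝ) ≠ 0 := Nat.cast_ne_zero.mpr (Nat.ne_of_gt (Nat.pos_of_mem_divisors hb))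
  rw [isMultiplicative_moebius.map_mul_of_coprime hab, Nat.cast_mul, Real.log_mul ha0 hb0]
  push_cast
  ring

open ArithmeticFunction ArithmeticFunction.Moebius in
/-- Golomb's arithmetic formula: for coprime `m, n > 1`,
`∑_{d ∣ mn} μ(d) (log d)² = 2 Λ(m) Λ(n)`. -/
theorem golomb_formula (m n : ℕ) (hm : 1 < m) (hn : 1 < n) (hmn : Nat.gcd m n = 1) :
    ∑ d ∈ (m * n).divisors, (μ d : ℝ) * Real.log d ^ 2 = 2 * Λ m * Λ n := by
  rw [sum_divisors_mul_moebius_mul_log_sq hmn, sum_divisors_moebius_eq_zero hm.ne',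
    sum_divisors_moebius_eq_zero hn.ne']
  -- `sum_moebius_mul_log_eq` is phrased with `ArithmeticFunction.log`
  simp only [← log_apply, sum_moebius_mul_log_eq]
  ring
end
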